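/- Let a, b, m be integers with 0 ≤ a ≤ b ≤ m and let G(t) = (b−a)! / (t+a)_{b−a+1}. Then for every integer k with 0 ≤ k ≤ m and every integer λ ≥ 0, the rational number D_m^λ · (1/λ!) · (G(t)·(t+k))^{(λ)}|_{t=−k} is an integer, where the superscript (λ) denotes the λ-th derivative. -/

import Mathlib

/-!
By the partial fraction expansion `n! / (x)_{n+1} = ∑_{j ≤ n} (-1)^j C(n,j) / (x + j)`, near
`t = -k` the function `G(t)(t+k)` is an integer combination of the bricks
`(t + k) / (t + r) = 1 + (k - r) / (t + r)` with `r = a + j`. The `λ`-th Taylor coefficient of such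
a brick at `-k` is `-(-1)^λ / (r - k)^λ` (or `0` when `r = k`, where the brick is constant), and
`r - k` divides `D_m` because `|r - k| ≤ m`.
-/

/-- The Pochhammer symbol `(x)ₖ = x(x+1)⋯(x+k-1)` for a real `x`. -/
noncomputable def poch (x : ℝ) (k : ℕ) : ℝ := ∏ m ∈ Finset.range k, (x + m)

open Finset Filter Topology
open scoped Nat

lemma poch_succ (x : ℝ) (n : ℕ) : poch x (n + 1) = poch x n * (x + n) := prod_range_succ _ _

lemma poch_succ' (x : ℝ) (n : ℕ) : poch x (n + 1) = x * poch (x + 1) n := by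
  rw [poch, prod_range_succ', mul_comm, poch]
  push_cast
  simp only [add_zero, add_assoc, add_comm (1 : ℝ)]

lemma eventually_cofinite_poch_add_ne_zero (x : ℝ) (n : ℕ) :
    ∀ᶠ t in cofinite, poch (t + x) n ≠ 0 := by
  have : ∀ᶠ t in cofinite, ∀ j ∈ range n, t + x + j ≠ 0 :=
    (eventually_all_finset _).2 fun j _ =>
      (eventually_cofinite_ne (-(x + j))).mono fun t ht h0 => ht (by linarith)
  exact this.mono fun t ht => prod_ne_zero_iff.2 ht

theorem factorial_div_poch_eq_sum (n : ℕ) (x : ℝ) (hx : poch x (n + 1) ≠ 0) :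
    n ! / poch x (n + 1) = ∑ j ∈ range (n + 1), (-1) ^ j * n.choose j / (x + j) := by
  induction n generalizing x with
  | zero => simp [poch]
  | succ n ih =>
    have hR₁ := poch_succ x (n + 1)
    have hR₂ := poch_succ' x (n + 1)
    have hP : poch x (n + 1) ≠ 0 := left_ne_zero_of_mul (hR₁ ▸ hx)
    have hQ : poch (x + 1) (n + 1) ≠ 0 := right_ne_zero_of_mul (hR₂ ▸ hx)
    have hrec : ((n + 1) ! : ℝ) / poch x (n + 2) =
        n ! / poch x (n + 1) - n ! / poch (x + 1) (n + 1) := by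
      rw [div_sub_div _ _ hP hQ, div_eq_div_iff hx (mul_ne_zero hP hQ), Nat.factorial_succ]
      push_cast at hR₁ ⊢
      linear_combination
        (-(n ! : ℝ) * poch (x + 1) (n + 1)) * hR₁ + ((n ! : ℝ) * poch x (n + 1)) * hR₂
    rw [hrec, ih x hP, ih (x + 1) hQ, sum_range_succ' _ (n + 1), sum_range_succ' _ n]
    have hdrop : ∑ k ∈ range (n + 1), (-1 : ℝ) ^ (k + 1) * n.choose (k + 1) / (x + (k + 1)) =
        ∑ k ∈ range n, (-1 : ℝ) ^ (k + 1) * n.choose (k + 1) / (x + (k + 1)) := by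
      simp [sum_range_succ]
    have hshift : ∑ k ∈ range (n + 1), (-1 : ℝ) ^ (k + 1) * n.choose k / (x + (k + 1)) =
        -∑ j ∈ range (n + 1), (-1) ^ j * n.choose j / (x + 1 + j) := by
      rw [← sum_neg_distrib]
      exact sum_congr rfl fun k _ => by ring
    -- Pascal's rule splits the new coefficients into those of the two sums
    push_cast [Nat.choose_succ_succ]
    simp only [mul_add, add_div, sum_add_distrib, hdrop, hshift]
    simp only [pow_zero, Nat.choose_zero_right, add_zero]
    ring

lemma factorial_mul_div_poch_eq_sum (n : ℕ) (t a k : ℝ) (h : poch (t + a) (n + 1) ≠ 0) :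
    n ! * (t + k) / poch (t + a) (n + 1) =
      ∑ j ∈ range (n + 1), (-1) ^ j * n.choose j * (1 + (k - (a + j)) * (t + (a + j))⁻¹) := by
  rw [mul_comm, mul_div_assoc, factorial_div_poch_eq_sum n _ h, mul_sum]
  refine sum_congr rfl fun j hj => ?_
  have : t + a + j ≠ 0 := prod_ne_zero_iff.1 h j hj
  simp only [← add_assoc]
  field_simp
  ring

section Brick

variable {𝕜 : Type*} [NontriviallyNormedField 𝕜]

lemma iteratedDeriv_one_add_mul_inv (l : ℕ) (e r x : 𝕜) :
    iteratedDeriv l (fun t => 1 + e * (t + r)⁻¹) x =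
      (if l = 0 then 1 else 0) + e * ((-1) ^ l * l ! * (x + r) ^ (-1 - l : ℤ)) := by
  rcases Nat.eq_zero_or_pos l with rfl | hl
  · simp
  · have := congrFun (iter_deriv_inv_linear l (1 : 𝕜) r) x
    simp only [one_mul, one_pow, mul_one] at this
    rw [iteratedDeriv_const_add hl, iteratedDeriv_const_mul_field, iteratedDeriv_eq_iterate, this,
      if_neg hl.ne', zero_add]

lemma contDiffAt_one_add_mul_inv {n : WithTop ℕ∞} {e r x : 𝕜} (h : e = 0 ∨ x + r ≠ 0) :
    ContDiffAt 𝕜 n (fun t => 1 + e * (t + r)⁻¹) x := by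
  rcases h with rfl | h
  · simpa using contDiffAt_const
  · exact contDiffAt_const.add (contDiffAt_const.mul ((contDiffAt_id.add contDiffAt_const).inv h))

end Brick

lemma exists_int_eq_pow_mul_mul_zpow {D : ℕ} {d : ℤ} (hd : d ≠ 0 → d ∣ D) (l : ℕ) :
    ∃ z : ℤ, (D : ℝ) ^ l * d * (d : ℝ) ^ (-1 - l : ℤ) = z := by
  rcases eq_or_ne d 0 with rfl | hd0
  · exact ⟨0, by simp⟩
  obtain ⟨q, hq⟩ := hd hd0
  refine ⟨q ^ l, ?_⟩
  have hdR : (d : ℝ) ≠ 0 := by exact_mod_cast hd0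
  have hDR : (D : ℝ) = d * q := by exact_mod_cast hq
  rw [show (-1 - l : ℤ) = -((l + 1 : ℕ) : ℤ) by push_cast; ring, zpow_neg, zpow_natCast, hDR]
  push_cast
  field_simp
  ring

lemma exists_int_eq_pow_div_factorial_mul_iteratedDeriv {D k r : ℕ}
    (hd : r ≠ k → (r : ℤ) - k ∣ D) (l : ℕ) :
    ∃ z : ℤ, (D : ℝ) ^ l * (1 / l !) *
      iteratedDeriv l (fun t : ℝ => 1 + ((k : ℝ) - r) * (t + r)⁻¹) (-k) = z := by
  obtain ⟨z, hz⟩ := exists_int_eq_pow_mul_mul_zpow (d := r - k)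
    (fun h => hd fun hrk => h (by rw [hrk, sub_self])) l
  refine ⟨(if l = 0 then 1 else 0) - (-1) ^ l * z, ?_⟩
  have hfac : (l ! : ℝ) ≠ 0 := by positivity
  push_cast at hz ⊢
  rw [iteratedDeriv_one_add_mul_inv, show -(k : ℝ) + r = r - k by ring,
    show (k : ℝ) - r = -(r - k) by ring, mul_add, ← hz, sub_eq_add_neg]
  congr 1
  · split_ifs with hl
    · simp [hl]
    · simp
  · field_simp

lemma sub_dvd_lcm_Icc {m i j : ℕ} (hi : i ≤ m) (hj : j ≤ m) (hij : i ≠ j) :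
    (i : ℤ) - j ∣ ((Icc 1 m).lcm id : ℕ) := by
  have : ((i : ℤ) - j).natAbs ∈ Icc 1 m := by simp only [mem_Icc]; omega
  exact Int.natAbs_dvd.1 (Int.natCast_dvd_natCast.2 (dvd_lcm this))

/-- **Lemma (denominator-type elementary bricks, integrality).** Let `0 ≤ a ≤ b ≤ m` and
`G(t) = (b-a)! / (t+a)_{b-a+1}`. For `0 ≤ k ≤ m` and `λ ≥ 0`, the value at `t = -k` of the λ-th
derivative of (the regular extension `h` of) `G(t)·(t+k)`, multiplied by `D_m^λ / λ!`, is an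
integer. Here `h` is any function continuous at `-k` agreeing with `G(t)(t+k)` away from `-k`. -/
theorem brick_denominator_integrality (a b m : ℕ) (hab : a ≤ b) (hbm : b ≤ m)
    (k : ℕ) (hk : k ≤ m) (lam : ℕ) (h : ℝ → ℝ)
    (hagree : ∀ t : ℝ, t ≠ -(k : ℝ) →
      h t = ((b - a).factorial : ℝ) * (t + k) / poch (t + a) (b - a + 1))
    (hcont : ContinuousAt h (-(k : ℝ))) :
    ∃ z : ℤ,
      (((Finset.Icc 1 m).lcm id : ℕ) : ℝ) ^ lam * (1 / (lam.factorial : ℝ)) *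
        iteratedDeriv lam h (-(k : ℝ)) = (z : ℝ) := by
  set n := b - a
  set g : ℕ → ℝ → ℝ := fun j t => 1 + ((k : ℝ) - (a + j : ℕ)) * (t + (a + j : ℕ))⁻¹
  have hg : ∀ j, ContDiffAt ℝ lam (g j) (-k) := fun j => contDiffAt_one_add_mul_inv <| by
    by_cases hj : a + j = k
    · exact .inl (by rw [hj, sub_self])
    · exact .inr fun h0 => hj (by exact_mod_cast (neg_add_eq_zero.1 h0).symm)
  have hloc : h =ᶠ[𝓝 (-(k : ℝ))] fun t => ∑ j ∈ range (n + 1), (-1) ^ j * n.choose j * g j t := by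
    refine (hcont.eventuallyEq_nhds_iff_eventuallyEq_nhdsNE ?_).1 ?_
    · exact (ContDiffAt.sum fun j _ => contDiffAt_const.mul (hg j)).continuousAt
    filter_upwards [self_mem_nhdsWithin,
      nhdsNE_le_cofinite _ (eventually_cofinite_poch_add_ne_zero a (n + 1))] with t ht hpoch
    rw [hagree t ht, factorial_mul_div_poch_eq_sum n t a k hpoch]
    simp only [g, Nat.cast_add]
  have hint : ∀ j ∈ range (n + 1), ∃ z : ℤ, (((Icc 1 m).lcm id : ℕ) : ℝ) ^ lam * (1 / lam !) *
      iteratedDeriv lam (g j) (-k) = z := fun j hj =>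
    exists_int_eq_pow_div_factorial_mul_iteratedDeriv
      (sub_dvd_lcm_Icc (by have := mem_range.1 hj; omega) hk) lam
  choose! z hz using hint
  refine ⟨∑ j ∈ range (n + 1), (-1) ^ j * n.choose j * z j, ?_⟩
  rw [hloc.iteratedDeriv_eq lam, iteratedDeriv_fun_sum fun j _ => contDiffAt_const.mul (hg j),
    mul_sum]
  push_cast
  refine sum_congr rfl fun j hj => ?_
  rw [iteratedDeriv_const_mul_field, ← hz j hj]
  ring
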